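/- arXiv:2510.00530 — 4 statements merged into one kernel-verified Lean document; each statement's English description precedes it below -/
import Mathlib

section
/- For all positive integers s and t, the metric dimension throttling number of the complete bipartite graph K_{s,t} satisfies th_dim(K_{s,t}) = s + t − 1. -/
open SimpleGraph Filter

/-- The `r`-truncated distance between vertices: `min(d(u,v), r+1)`. -/
noncomputable def truncDist {V : Type*} (G : SimpleGraph V) (r : ℕ) (u v : V) : ℕ∞ :=
  min (G.edist u v) (r + 1)

/-- `S` is a distance-`r` resolving set of `G`. -/
def IsDistResolving {V : Type*} (G : SimpleGraph V) (r : ℕ) (S : Finset V) : Prop :=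
  ∀ x y : V, x ≠ y → ∃ v ∈ S, truncDist G r v x ≠ truncDist G r v y

/-- The `r`-truncated metric dimension of `G`. -/
noncomputable def dimr {V : Type*} (G : SimpleGraph V) (r : ℕ) : ℕ :=
  sInf {k | ∃ S : Finset V, IsDistResolving G r S ∧ S.card = k}

/-- The metric dimension throttling number of `G`. -/
noncomputable def thDim {V : Type*} (G : SimpleGraph V) : ℕ :=
  sInf {m | ∃ r : ℕ, m = r + dimr G r}

/-- `S` is a resolving set of `G` (untruncated distances). -/
def IsResolving {V : Type*} (G : SimpleGraph V) (S : Finset V) : Prop :=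
  ∀ x y : V, x ≠ y → ∃ v ∈ S, G.edist v x ≠ G.edist v y

/-- The metric dimension of `G`. -/
noncomputable def metricDim {V : Type*} (G : SimpleGraph V) : ℕ :=
  sInf {k | ∃ S : Finset V, IsResolving G S ∧ S.card = k}

/-- Distance from an edge (as an unordered pair `{u,w}`) to a vertex:
`min(d(u,v), d(w,v))`. -/
noncomputable def edgeEDist {V : Type*} (G : SimpleGraph V) (e : Sym2 V) (v : V) : ℕ∞ :=
  Sym2.lift ⟨fun a b => min (G.edist a v) (G.edist b v), fun _ _ => min_comm _ _⟩ e

/-- The `r`-truncated distance from an edge to a vertex. -/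
noncomputable def truncEdgeDist {V : Type*} (G : SimpleGraph V) (r : ℕ) (e : Sym2 V)
    (v : V) : ℕ∞ :=
  min (edgeEDist G e v) (r + 1)

/-- `S` is a distance-`r` edge resolving set of `G`. -/
def IsEdgeResolving {V : Type*} (G : SimpleGraph V) (r : ℕ) (S : Finset V) : Prop :=
  ∀ e ∈ G.edgeSet, ∀ f ∈ G.edgeSet, e ≠ f →
    ∃ v ∈ S, truncEdgeDist G r e v ≠ truncEdgeDist G r f v

/-- The `r`-truncated edge metric dimension of `G`. -/
noncomputable def edimr {V : Type*} (G : SimpleGraph V) (r : ℕ) : ℕ :=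
  sInf {k | ∃ S : Finset V, IsEdgeResolving G r S ∧ S.card = k}

/-- The edge metric dimension throttling number of `G`. -/
noncomputable def thEdim {V : Type*} (G : SimpleGraph V) : ℕ :=
  sInf {m | ∃ r : ℕ, m = r + edimr G r}

/-- An item of `G` is a vertex or an edge; distance from an item to a vertex. -/
noncomputable def itemEDist {V : Type*} (G : SimpleGraph V) : V ⊕ G.edgeSet → V → ℕ∞
  | Sum.inl u, v => G.edist u v
  | Sum.inr e, v => edgeEDist G (e : Sym2 V) v

/-- The `r`-truncated distance from an item to a vertex. -/
noncomputable def truncItemDist {V : Type*} (G : SimpleGraph V) (r : ℕ)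
    (t : V ⊕ G.edgeSet) (v : V) : ℕ∞ :=
  min (itemEDist G t v) (r + 1)

/-- `S` is a distance-`r` mixed resolving set of `G`. -/
def IsMixedResolving {V : Type*} (G : SimpleGraph V) (r : ℕ) (S : Finset V) : Prop :=
  ∀ t₁ t₂ : V ⊕ G.edgeSet, t₁ ≠ t₂ →
    ∃ v ∈ S, truncItemDist G r t₁ v ≠ truncItemDist G r t₂ v

/-- The `r`-truncated mixed metric dimension of `G`. -/
noncomputable def mdimr {V : Type*} (G : SimpleGraph V) (r : ℕ) : ℕ :=
  sInf {k | ∃ S : Finset V, IsMixedResolving G r S ∧ S.card = k}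

/-- The mixed metric dimension throttling number of `G`. -/
noncomputable def thMdim {V : Type*} (G : SimpleGraph V) : ℕ :=
  sInf {m | ∃ r : ℕ, m = r + mdimr G r}

/-- `S` is a mixed resolving set of `G` (untruncated distances). -/
def IsMixedResolvingSet {V : Type*} (G : SimpleGraph V) (S : Finset V) : Prop :=
  ∀ t₁ t₂ : V ⊕ G.edgeSet, t₁ ≠ t₂ → ∃ v ∈ S, itemEDist G t₁ v ≠ itemEDist G t₂ v

/-- The mixed metric dimension of `G`. -/
noncomputable def mixedDim {V : Type*} (G : SimpleGraph V) : ℕ :=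
  sInf {k | ∃ S : Finset V, IsMixedResolvingSet G S ∧ S.card = k}

/-!
In `K_{s,t}` two vertices on the same side have the same neighbourhood, hence the same distance
to every third vertex: a resolving set, whatever the truncation radius, misses at most one vertex
per side, so `r + dim_r ≥ 1 + (s + t - 2)` once `r ≥ 1`. For `r = 0` truncated distances only
tell whether a vertex is the landmark itself, so `dim_0 = s + t - 1`, and that value is attained.
-/

namespace SimpleGraph

variable {V : Type*} {G : SimpleGraph V}

lemma edist_le_of_neighborSet_subset {x y v : V} (h : G.neighborSet y ⊆ G.neighborSet x)
    (hvy : v ≠ y) : G.edist x v ≤ G.edist y v := by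
  by_cases hr : G.Reachable y v
  · obtain ⟨p, hp⟩ := hr.exists_walk_length_eq_edist
    cases p with
    | nil => exact absurd rfl hvy
    | cons hadj q =>
      -- the first step of a shortest walk from `y` can be made from `x` instead
      have hadj' : G.Adj x _ := h hadj
      calc G.edist x v ≤ (Walk.cons hadj' q).length := edist_le _
        _ = G.edist y v := by rw [← hp, Walk.length_cons, Walk.length_cons]
  · rw [edist_eq_top_of_not_reachable hr]
    exact le_top

lemma edist_eq_of_neighborSet_eq {x y v : V} (h : G.neighborSet x = G.neighborSet y)
    (hvx : v ≠ x) (hvy : v ≠ y) : G.edist x v = G.edist y v :=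
  le_antisymm (edist_le_of_neighborSet_subset h.ge hvy)
    (edist_le_of_neighborSet_subset h.le hvx)

lemma completeBipartiteGraph_neighborSet_eq {W : Type*} {x y : V ⊕ W}
    (h : x.isLeft = y.isLeft) :
    (completeBipartiteGraph V W).neighborSet x = (completeBipartiteGraph V W).neighborSet y := by
  ext v
  cases x <;> cases y <;> cases v <;> simp_all

end SimpleGraph

section Resolving

variable {V : Type*} {G : SimpleGraph V} {r : ℕ}

lemma truncDist_self (v : V) : truncDist G r v v = 0 := by
  simp [truncDist]

lemma truncDist_pos {u v : V} (h : u ≠ v) : 0 < truncDist G r u v :=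
  lt_min (SimpleGraph.edist_pos_of_ne h) (by positivity)

lemma truncDist_zero_of_ne {u v : V} (h : u ≠ v) : truncDist G 0 u v = 1 :=
  min_eq_right (Order.one_le_iff_pos.mpr (SimpleGraph.edist_pos_of_ne h))

lemma isDistResolving_of_subsingleton_compl {S : Finset V}
    (hS : ∀ x ∉ S, ∀ y ∉ S, x = y) : IsDistResolving G r S := by
  intro x y hxy
  by_cases hx : x ∈ S
  · exact ⟨x, hx, by rw [truncDist_self]; exact (truncDist_pos hxy).ne⟩
  · have hy : y ∈ S := by_contra fun hy => hxy (hS x hx y hy)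
    exact ⟨y, hy, by rw [truncDist_self]; exact (truncDist_pos hxy.symm).ne'⟩

lemma IsDistResolving.card_compl_le [Fintype V] [DecidableEq V] {β : Type*} [Fintype β]
    {S : Finset V} (hS : IsDistResolving G r S) (f : V → β)
    (hf : ∀ x y, f x = f y → ∀ v, v ≠ x → v ≠ y → truncDist G r v x = truncDist G r v y) :
    Sᶜ.card ≤ Fintype.card β := by
  refine Finset.card_le_card_of_injOn f (fun _ _ => Finset.mem_coe.mpr (Finset.mem_univ _)) ?_
  intro x hx y hy hfxy
  by_contra hxy
  obtain ⟨v, hvS, hv⟩ := hS x y hxy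
  have hvx : v ≠ x := by rintro rfl; exact Finset.mem_compl.mp hx hvS
  have hvy : v ≠ y := by rintro rfl; exact Finset.mem_compl.mp hy hvS
  exact hv (hf x y hfxy v hvx hvy)

lemma card_sub_le_of_isDistResolving [Fintype V] {β : Type*} [Fintype β] {S : Finset V}
    (hS : IsDistResolving G r S) (f : V → β)
    (hf : ∀ x y, f x = f y → ∀ v, v ≠ x → v ≠ y → truncDist G r v x = truncDist G r v y) :
    Fintype.card V - Fintype.card β ≤ S.card := by
  classical
  have := Finset.card_compl_add_card S
  have := hS.card_compl_le f hf
  omega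

lemma card_sub_one_le_of_isDistResolving_zero [Fintype V] {S : Finset V}
    (hS : IsDistResolving G 0 S) : Fintype.card V - 1 ≤ S.card :=
  card_sub_le_of_isDistResolving hS (fun _ => ()) fun _ _ _ _ hvx hvy => by
    rw [truncDist_zero_of_ne hvx, truncDist_zero_of_ne hvy]

lemma card_sub_two_le_of_isDistResolving_completeBipartiteGraph {W : Type*} [Fintype V]
    [Fintype W] {S : Finset (V ⊕ W)} (hS : IsDistResolving (completeBipartiteGraph V W) r S) :
    Fintype.card V + Fintype.card W - 2 ≤ S.card := by
  have := card_sub_le_of_isDistResolving hS Sum.isLeft fun x y hxy v hvx hvy => by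
    simp only [truncDist, SimpleGraph.edist_comm (u := v),
      SimpleGraph.edist_eq_of_neighborSet_eq
        (SimpleGraph.completeBipartiteGraph_neighborSet_eq hxy) hvx hvy]
  simpa using this

end Resolving

section Dimension

variable {V : Type*} {G : SimpleGraph V} {r : ℕ}

lemma dimr_le {S : Finset V} (hS : IsDistResolving G r S) : dimr G r ≤ S.card :=
  Nat.sInf_le ⟨S, hS, rfl⟩

lemma exists_isDistResolving_card_eq_dimr [Fintype V] :
    ∃ S : Finset V, IsDistResolving G r S ∧ S.card = dimr G r := by
  have hne : {k | ∃ S : Finset V, IsDistResolving G r S ∧ S.card = k}.Nonempty :=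
    ⟨_, Finset.univ, isDistResolving_of_subsingleton_compl (by simp), rfl⟩
  exact Nat.sInf_mem hne

lemma dimr_le_card_sub_one [Fintype V] : dimr G r ≤ Fintype.card V - 1 := by
  classical
  cases isEmpty_or_nonempty V with
  | inl _ => simpa using dimr_le (G := G) (r := r) (S := ∅) fun x => isEmptyElim x
  | inr hV =>
    obtain ⟨w⟩ := hV
    refine (dimr_le (isDistResolving_of_subsingleton_compl (S := Finset.univ.erase w) ?_)).trans ?_
    · simp
    · simp [Finset.card_erase_of_mem]

lemma thDim_le (r : ℕ) : thDim G ≤ r + dimr G r :=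
  Nat.sInf_le ⟨r, rfl⟩

lemma thDim_le_card_sub_one [Fintype V] : thDim G ≤ Fintype.card V - 1 :=
  (thDim_le 0).trans (by simpa using dimr_le_card_sub_one)

lemma le_thDim {k : ℕ} (h : ∀ r, k ≤ r + dimr G r) : k ≤ thDim G := by
  obtain ⟨r, hr⟩ : thDim G ∈ {m | ∃ r : ℕ, m = r + dimr G r} := Nat.sInf_mem ⟨_, 0, rfl⟩
  exact hr ▸ h r

end Dimension

theorem thDim_completeBipartiteGraph (V W : Type*) [Fintype V] [Fintype W] :
    thDim (completeBipartiteGraph V W) = Fintype.card V + Fintype.card W - 1 := by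
  apply le_antisymm
  · simpa [Fintype.card_sum] using thDim_le_card_sub_one (G := completeBipartiteGraph V W)
  · refine le_thDim fun r => ?_
    obtain ⟨S, hS, hcard⟩ := exists_isDistResolving_card_eq_dimr
      (G := completeBipartiteGraph V W) (r := r)
    rcases r with _ | r
    · simpa [Fintype.card_sum, hcard] using card_sub_one_le_of_isDistResolving_zero hS
    · have := card_sub_two_le_of_isDistResolving_completeBipartiteGraph hS
      omega

theorem stmt8_general (s t : ℕ) :
    thDim (completeBipartiteGraph (Fin s) (Fin t)) = s + t - 1 := by
  simpa using thDim_completeBipartiteGraph (Fin s) (Fin t)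

/-- For all positive integers `s, t`,
`th_dim(K_{s,t}) = s + t - 1`. -/
theorem stmt8 (s t : ℕ) (hs : 1 ≤ s) (ht : 1 ≤ t) :
    thDim (completeBipartiteGraph (Fin s) (Fin t)) = s + t - 1 :=
  stmt8_general s t
end

section
/- Fix a positive integer ℓ and a set S ⊆ {1, …, ℓ} with 1 ∈ S and ℓ ∈ S. Then th_dim(Circ(n, S)) = Θ(√n): there exist constants c, C > 0 (depending only on ℓ and S) such that for all sufficiently large n, c·√n ≤ th_dim(Circ(n, S)) ≤ C·√n. -/
open SimpleGraph Filter

/-!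
Lower bound: every jump of `Circ(n, S)` has length at most `ℓ`, so a landmark sees at most
`2rℓ + 1` vertices within distance `r`, and the vertices seen by no landmark all have the same
truncated distance vector, so at most one of them exists. Hence an `r`-resolving set of size `k`
gives `n ≤ 1 + k (2rℓ + 1)`, i.e. `r + k ≳ √(n / ℓ)`.

Upper bound: with `r = ⌊√n⌋`, the `(r + 1) ℓ` landmarks `i (r + 1) + s` (`i ≤ r`, `s < ℓ`) are
`r`-resolving. Every vertex `x` is `v + tℓ` for such a landmark `v` and some `t` with `tℓ ≤ r`, so
`v` reaches `x` in `t` jumps; anything that `v` reaches in `t` jumps differs from `x` by an integer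
in `[-2tℓ, 0]`, which rules out every `y` with `(y - x).val + 2r < n`.
-/

section Resolving

open Finset

variable {V : Type*} {G : SimpleGraph V} {r : ℕ}

lemma truncDist_lt_truncDist {v x y : V} (hx : G.edist v x ≤ r)
    (hxy : G.edist v x < G.edist v y) : truncDist G r v x < truncDist G r v y := by
  have hr : G.edist v x < r + 1 := hx.trans_lt (by exact_mod_cast r.lt_succ_self)
  rw [truncDist, min_eq_left hr.le]
  exact lt_min hxy hr

lemma truncDist_eq_of_lt_edist {v x : V} (h : r < G.edist v x) : truncDist G r v x = r + 1 :=
  min_eq_right (Order.add_one_le_of_lt h)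

lemma isDistResolving_univ [Fintype V] : IsDistResolving G r univ := fun x y hxy =>
  ⟨x, mem_univ x, (truncDist_lt_truncDist (by simp) (by simpa using G.edist_pos_of_ne hxy)).ne⟩

lemma thDim_le_of_isDistResolving {T : Finset V} (hT : IsDistResolving G r T) :
    thDim G ≤ r + #T :=
  calc thDim G ≤ r + dimr G r := Nat.sInf_le ⟨r, rfl⟩
    _ ≤ r + #T := by gcongr; exact Nat.sInf_le ⟨T, hT, rfl⟩

lemma exists_isDistResolving_thDim_eq [Fintype V] :
    ∃ r, ∃ T : Finset V, IsDistResolving G r T ∧ thDim G = r + #T := by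
  obtain ⟨r, hr⟩ := Nat.sInf_mem (s := {m | ∃ r, m = r + dimr G r}) ⟨_, 0, rfl⟩
  obtain ⟨T, hT, hcard⟩ := Nat.sInf_mem
    (s := {k | ∃ T : Finset V, IsDistResolving G r T ∧ #T = k}) ⟨_, _, isDistResolving_univ, rfl⟩
  exact ⟨r, T, hT, hr.trans (by rw [dimr, ← hcard])⟩

lemma card_le_one_add_mul_of_isDistResolving [Fintype V] {T : Finset V} {b : ℕ}
    (hT : IsDistResolving G r T) (hball : ∀ v ∈ T, #{x | G.edist v x ≤ r} ≤ b) :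
    Fintype.card V ≤ 1 + #T * b := by
  classical
  have hfar : #{x | ∀ v ∈ T, (r : ℕ∞) < G.edist v x} ≤ 1 := by
    refine card_le_one.2 fun x hx y hy => by_contra fun hxy => ?_
    obtain ⟨v, hv, hne⟩ := hT x y hxy
    simp only [mem_filter, mem_univ, true_and] at hx hy
    exact hne ((truncDist_eq_of_lt_edist (hx v hv)).trans (truncDist_eq_of_lt_edist (hy v hv)).symm)
  have hcover : (univ : Finset V) ⊆ ({x | ∀ v ∈ T, (r : ℕ∞) < G.edist v x} : Finset V) ∪
      T.biUnion fun v => {x | G.edist v x ≤ r} := by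
    intro x _
    by_cases h : ∀ v ∈ T, (r : ℕ∞) < G.edist v x
    · exact mem_union_left _ (by simpa using h)
    · push Not at h
      obtain ⟨v, hv, hle⟩ := h
      exact mem_union_right _ (mem_biUnion.2 ⟨v, hv, by simpa using hle⟩)
  calc Fintype.card V = #(univ : Finset V) := rfl
    _ ≤ _ := card_le_card hcover
    _ ≤ _ := card_union_le _ _
    _ ≤ 1 + ∑ _ ∈ T, b := add_le_add hfar (card_biUnion_le.trans (sum_le_sum hball))
    _ = 1 + #T * b := by rw [sum_const, smul_eq_mul]

end Resolving

lemma SimpleGraph.edist_circulantGraph_add_nsmul_le {A : Type*} [AddCommGroup A] {s : Set A}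
    {a : A} (ha : a ∈ s) (u : A) (t : ℕ) : (circulantGraph s).edist u (u + t • a) ≤ t := by
  induction t with
  | zero => simp
  | succ t ih =>
    have hstep : (circulantGraph s).edist (u + t • a) (u + (t + 1) • a) ≤ 1 := by
      rw [edist_le_one_iff_adj_or_eq, circulantGraph_adj, succ_nsmul, ← add_assoc]
      by_cases h0 : a = 0
      · simp [h0]
      · exact Or.inl ⟨by simpa using h0, Or.inr (by simpa using ha)⟩
    calc _ ≤ _ := SimpleGraph.edist_triangle
      _ ≤ (t : ℕ∞) + 1 := add_le_add ih hstep
      _ = _ := by push_cast; rfl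

section Circulant

open Finset

variable {n ℓ : ℕ} {S : Set ℕ}

local notation "Circ" => circulantGraph ((Nat.cast : ℕ → ZMod n) '' S)

lemma exists_intCast_of_circulant_adj (hS : S ⊆ Set.Iic ℓ) {u v : ZMod n} (h : (Circ).Adj u v) :
    ∃ k : ℤ, |k| ≤ ℓ ∧ v = u + k := by
  rw [circulantGraph_adj] at h
  obtain ⟨-, ⟨a, ha, hav⟩ | ⟨a, ha, hav⟩⟩ := h
  · refine ⟨-a, by simpa using hS ha, ?_⟩
    push_cast
    rw [hav]; abel
  · refine ⟨a, by simpa using hS ha, ?_⟩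
    push_cast
    rw [hav]; abel

lemma exists_intCast_of_circulant_walk (hS : S ⊆ Set.Iic ℓ) {u x : ZMod n} (p : (Circ).Walk u x) :
    ∃ j : ℤ, |j| ≤ p.length * ℓ ∧ x = u + j := by
  induction p with
  | nil => exact ⟨0, by simp, by simp⟩
  | cons h _ ih =>
    obtain ⟨k, hk, rfl⟩ := exists_intCast_of_circulant_adj hS h
    obtain ⟨j, hj, rfl⟩ := ih
    refine ⟨k + j, ?_, by push_cast; abel⟩
    calc |k + j| ≤ |k| + |j| := abs_add_le k j
      _ ≤ _ := by rw [Walk.length_cons]; push_cast; linarith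

lemma exists_intCast_of_circulant_edist_le (hS : S ⊆ Set.Iic ℓ) {u x : ZMod n} {t : ℕ}
    (h : (Circ).edist u x ≤ t) : ∃ j : ℤ, |j| ≤ t * ℓ ∧ x = u + j := by
  obtain ⟨p, hp⟩ := exists_walk_of_edist_ne_top (ne_top_of_le_ne_top (ENat.natCast_ne_top t) h)
  obtain ⟨j, hj, hx⟩ := exists_intCast_of_circulant_walk hS p
  have hlen : p.length ≤ t := by rw [← hp] at h; exact_mod_cast h
  exact ⟨j, hj.trans (by gcongr), hx⟩

lemma card_circulant_ball_le [NeZero n] (hS : S ⊆ Set.Iic ℓ) (v : ZMod n) (r : ℕ) :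
    #{x | (Circ).edist v x ≤ r} ≤ 2 * (r * ℓ) + 1 := by
  calc #{x | (Circ).edist v x ≤ r}
      ≤ #((Icc (-(r * ℓ : ℤ)) (r * ℓ)).image fun j : ℤ => v + j) := by
        refine card_le_card fun x hx => ?_
        obtain ⟨j, hj, rfl⟩ := exists_intCast_of_circulant_edist_le hS (mem_filter.1 hx).2
        exact mem_image_of_mem _ (mem_Icc.2 (abs_le.1 (by exact_mod_cast hj)))
    _ ≤ #(Icc (-(r * ℓ : ℤ)) (r * ℓ)) := card_image_le
    _ = 2 * (r * ℓ) + 1 := by rw [Int.card_Icc]; omega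

lemma card_le_mul_thDim_sq [NeZero n] (hS : S ⊆ Set.Iic ℓ) (hn : 2 ≤ n) :
    n ≤ (2 * ℓ + 2) * thDim Circ ^ 2 := by
  obtain ⟨r, T, hT, hth⟩ := exists_isDistResolving_thDim_eq (G := Circ)
  have hcount := card_le_one_add_mul_of_isDistResolving hT fun v _ => card_circulant_ball_le hS v r
  rw [ZMod.card] at hcount
  have hk : 1 ≤ #T := Nat.pos_of_ne_zero fun h => by rw [h] at hcount; omega
  rw [hth]
  nlinarith [Nat.mul_le_mul hk hk, Nat.zero_le (ℓ * #T * #T), Nat.zero_le (ℓ * r * r),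
    Nat.zero_le (r * #T)]

def blockLandmarks (n r ℓ : ℕ) : Finset (ZMod n) :=
  (range (r + 1) ×ˢ range ℓ).image fun q => ((q.1 * (r + 1) + q.2 : ℕ) : ZMod n)

lemma card_blockLandmarks_le (n r ℓ : ℕ) : #(blockLandmarks n r ℓ) ≤ (r + 1) * ℓ :=
  card_image_le.trans_eq (by simp)

lemma exists_mem_blockLandmarks_eq_add_nsmul [NeZero n] (hℓ : 0 < ℓ) {r : ℕ}
    (hn : n ≤ (r + 1) ^ 2) (x : ZMod n) :
    ∃ v ∈ blockLandmarks n r ℓ, ∃ t : ℕ, t * ℓ ≤ r ∧ x = v + t • (ℓ : ZMod n) := by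
  set q := x.val % (r + 1)
  have hq : q < r + 1 := Nat.mod_lt _ r.succ_pos
  have hqℓ : q / ℓ * ℓ + q % ℓ = q := by rw [Nat.mul_comm]; exact Nat.div_add_mod q ℓ
  have hi : x.val / (r + 1) < r + 1 :=
    Nat.div_lt_of_lt_mul ((ZMod.val_lt x).trans_le (by nlinarith))
  refine ⟨_, mem_image.2 ⟨(x.val / (r + 1), q % ℓ),
    mem_product.2 ⟨mem_range.2 hi, mem_range.2 (Nat.mod_lt _ hℓ)⟩, rfl⟩, q / ℓ, by omega, ?_⟩
  have hx : x.val = x.val / (r + 1) * (r + 1) + q % ℓ + q / ℓ * ℓ := by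
    have := Nat.div_add_mod' x.val (r + 1); omega
  rw [nsmul_eq_mul, ← Nat.cast_mul, ← Nat.cast_add, ← hx, ZMod.natCast_val, ZMod.cast_id]

lemma exists_blockLandmarks_truncDist_lt [NeZero n] (hS : S ⊆ Set.Iic ℓ) (hℓS : ℓ ∈ S)
    (hℓ : 0 < ℓ) {r : ℕ} (hn : n ≤ (r + 1) ^ 2) {x y : ZMod n} (hxy : x ≠ y)
    (hgap : (y - x).val + 2 * r < n) :
    ∃ v ∈ blockLandmarks n r ℓ, truncDist (Circ) r v x < truncDist (Circ) r v y := by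
  obtain ⟨v, hv, t, htℓ, hx⟩ := exists_mem_blockLandmarks_eq_add_nsmul hℓ hn x
  have ht : t ≤ r := (Nat.le_mul_of_pos_right t hℓ).trans htℓ
  have hvx : (Circ).edist v x ≤ t :=
    hx ▸ edist_circulantGraph_add_nsmul_le (Set.mem_image_of_mem _ hℓS) v t
  have hvy : ¬ (Circ).edist v y ≤ t := by
    intro h
    obtain ⟨j, hj, hyv⟩ := exists_intCast_of_circulant_edist_le hS h
    have hδ : 0 < (y - x).val := ZMod.val_pos.2 (sub_ne_zero.2 hxy.symm)
    have hdvd : (n : ℤ) ∣ (y - x).val + t * ℓ - j := by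
      rw [← ZMod.intCast_zmod_eq_zero_iff_dvd]
      push_cast
      rw [ZMod.natCast_val, ZMod.cast_id, hyv, hx, nsmul_eq_mul]
      ring
    have htℓr : (t * ℓ : ℤ) ≤ r := by exact_mod_cast htℓ
    have hgap' : ((y - x).val : ℤ) + 2 * r < n := by exact_mod_cast hgap
    obtain ⟨hj₁, hj₂⟩ := abs_le.1 hj
    have := Int.eq_zero_of_dvd_of_nonneg_of_lt (by linarith) (by linarith) hdvd
    omega
  exact ⟨v, hv, truncDist_lt_truncDist (hvx.trans (by exact_mod_cast ht))
    (hvx.trans_lt (not_le.1 hvy))⟩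

lemma isDistResolving_blockLandmarks [NeZero n] (hS : S ⊆ Set.Iic ℓ) (hℓS : ℓ ∈ S) (hℓ : 0 < ℓ)
    {r : ℕ} (hn : n ≤ (r + 1) ^ 2) (hr : 4 * r < n) :
    IsDistResolving (Circ) r (blockLandmarks n r ℓ) := by
  intro x y hxy
  by_cases hgap : (y - x).val + 2 * r < n
  · obtain ⟨v, hv, hlt⟩ := exists_blockLandmarks_truncDist_lt hS hℓS hℓ hn hxy hgap
    exact ⟨v, hv, hlt.ne⟩
  · have hval : (x - y).val = n - (y - x).val := by
      rw [← neg_sub, ZMod.neg_val, if_neg (sub_ne_zero.2 hxy.symm)]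
    have hgap' : (x - y).val + 2 * r < n := by
      have := ZMod.val_lt (y - x); omega
    obtain ⟨v, hv, hlt⟩ := exists_blockLandmarks_truncDist_lt hS hℓS hℓ hn hxy.symm hgap'
    exact ⟨v, hv, hlt.ne'⟩

lemma thDim_circulant_le [NeZero n] (hS : S ⊆ Set.Iic ℓ) (hℓS : ℓ ∈ S) (hℓ : 0 < ℓ)
    {r : ℕ} (hn : n ≤ (r + 1) ^ 2) (hr : 4 * r < n) : thDim (Circ) ≤ r + (r + 1) * ℓ :=
  (thDim_le_of_isDistResolving (isDistResolving_blockLandmarks hS hℓS hℓ hn hr)).trans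
    (Nat.add_le_add_left (card_blockLandmarks_le n r ℓ) r)

end Circulant

theorem stmt10_general (ℓ : ℕ) (S : Set ℕ) (hS : S ⊆ Set.Icc 1 ℓ) (hℓ : ℓ ∈ S) :
    ∃ c C : ℝ, 0 < c ∧ 0 < C ∧ ∃ N : ℕ, ∀ n : ℕ, N ≤ n →
      c * Real.sqrt n ≤ (thDim (circulantGraph ((Nat.cast : ℕ → ZMod n) '' S)) : ℝ) ∧
      (thDim (circulantGraph ((Nat.cast : ℕ → ZMod n) '' S)) : ℝ) ≤ C * Real.sqrt n := by
  have hℓ0 : 0 < ℓ := (hS hℓ).1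
  have hSℓ : S ⊆ Set.Iic ℓ := fun a ha => (hS ha).2
  refine ⟨1 / (2 * ℓ + 2), 2 * (ℓ + 1), by positivity, by positivity, 25, fun n hn => ?_⟩
  have : NeZero n := ⟨by omega⟩
  set th := thDim (circulantGraph ((Nat.cast : ℕ → ZMod n) '' S))
  constructor
  · have hlow : (n : ℝ) ≤ (2 * ℓ + 2) * th ^ 2 := by
      exact_mod_cast card_le_mul_thDim_sq hSℓ (by omega : 2 ≤ n)
    rw [one_div_mul_eq_div, div_le_iff₀ (by positivity), Real.sqrt_le_left (by positivity)]
    nlinarith [sq_nonneg (th : ℝ)]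
  · set r := Nat.sqrt n
    have hr : 5 ≤ r := Nat.le_sqrt.2 hn
    have hup := thDim_circulant_le hSℓ hℓ hℓ0 (Nat.lt_succ_sqrt' n).le
      (by nlinarith [Nat.sqrt_le' n])
    have hr' : (r : ℝ) ≤ √n := Real.nat_sqrt_le_real_sqrt
    have hr1 : (5 : ℝ) ≤ r := by exact_mod_cast hr
    calc (th : ℝ) ≤ r + (r + 1) * ℓ := by exact_mod_cast hup
      _ ≤ 2 * (ℓ + 1) * r := by nlinarith
      _ ≤ 2 * (ℓ + 1) * √n := by gcongr

/-- For a fixed `ℓ ≥ 1` and `S ⊆ {1,…,ℓ}` with `1 ∈ S` and `ℓ ∈ S`,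
`th_dim(Circ(n,S)) = Θ(√n)`. -/
theorem stmt10 (ℓ : ℕ) (hℓ1 : 1 ≤ ℓ) (S : Set ℕ) (hS : S ⊆ Set.Icc 1 ℓ)
    (h1 : 1 ∈ S) (hℓ : ℓ ∈ S) :
    ∃ c C : ℝ, 0 < c ∧ 0 < C ∧ ∃ N : ℕ, ∀ n : ℕ, N ≤ n →
      c * Real.sqrt n ≤ (thDim (circulantGraph ((Nat.cast : ℕ → ZMod n) '' S)) : ℝ) ∧
      (thDim (circulantGraph ((Nat.cast : ℕ → ZMod n) '' S)) : ℝ) ≤ C * Real.sqrt n :=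
  stmt10_general ℓ S hS hℓ
end

section
/- The maximum possible edge metric dimension throttling number of a tree of order n ≥ 2 is n − 2: every tree T on n ≥ 2 vertices satisfies th_edim(T) ≤ n − 2, and the star K_{1,n−1} satisfies th_edim(K_{1,n−1}) = n − 2. -/
open SimpleGraph Filter

/-! For `r = 0` the truncated distance from an edge to a vertex only records whether the vertex
lies on the edge, and in a triangle-free graph the edges are already determined by their
endpoints outside any fixed edge `uw`: an edge meeting `u` but not `w` has its other end outside
`{u, w}`, and two edges through that end and `u`, `w` would close a triangle. So all vertices but
the two ends of one edge form a distance-`0` edge resolving set, giving `n - 2` for trees.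
In the star every vertex is within distance `1` of every edge, so no `r` helps: a resolving set
still has to tell apart the edges to any two leaves, hence contains all leaves but one. -/

open Finset

namespace SimpleGraph

variable {V : Type*} {G : SimpleGraph V}

def SeparatesEdges (G : SimpleGraph V) (S : Finset V) : Prop :=
  ∀ e ∈ G.edgeSet, ∀ f ∈ G.edgeSet, e ≠ f → ∃ v ∈ S, ¬(v ∈ e ↔ v ∈ f)

lemma edgeEDist_eq_zero_iff {e : Sym2 V} {v : V} : edgeEDist G e v = 0 ↔ v ∈ e := by
  induction e using Sym2.ind with
  | _ a b =>
    change min _ _ = 0 ↔ _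
    rw [← bot_eq_zero, min_eq_bot, bot_eq_zero, edist_eq_zero_iff, edist_eq_zero_iff,
      Sym2.mem_iff, eq_comm, eq_comm (a := b)]

lemma edgeEDist_le_one_of_adj {e : Sym2 V} {x v : V} (hx : x ∈ e) (hxv : G.Adj x v) :
    edgeEDist G e v ≤ 1 := by
  induction e using Sym2.ind with
  | _ a b =>
    rcases Sym2.mem_iff.mp hx with rfl | rfl
    · exact min_le_of_left_le (edist_eq_one_iff_adj.mpr hxv).le
    · exact min_le_of_right_le (edist_eq_one_iff_adj.mpr hxv).le

lemma edgeEDist_eq_ite [DecidableEq V] {e : Sym2 V} {v : V} (h : edgeEDist G e v ≤ 1) :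
    edgeEDist G e v = if v ∈ e then 0 else 1 := by
  split_ifs with hv
  · exact edgeEDist_eq_zero_iff.mpr hv
  · exact le_antisymm h (Order.one_le_iff_ne_zero.mpr (mt edgeEDist_eq_zero_iff.mp hv))

lemma truncEdgeDist_eq_zero_iff {r : ℕ} {e : Sym2 V} {v : V} :
    truncEdgeDist G r e v = 0 ↔ v ∈ e := by
  simp [truncEdgeDist, edgeEDist_eq_zero_iff]

lemma SeparatesEdges.isEdgeResolving {S : Finset V} (hS : G.SeparatesEdges S) (r : ℕ) :
    IsEdgeResolving G r S := by
  intro e he f hf hef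
  obtain ⟨v, hvS, hv⟩ := hS e he f hf hef
  exact ⟨v, hvS, fun h => hv (by rw [← truncEdgeDist_eq_zero_iff (G := G) (r := r), h,
    truncEdgeDist_eq_zero_iff])⟩

lemma IsEdgeResolving.separatesEdges {r : ℕ} {S : Finset V} (hS : IsEdgeResolving G r S)
    (hG : ∀ e ∈ G.edgeSet, ∀ v, edgeEDist G e v ≤ 1) : G.SeparatesEdges S := by
  classical
  intro e he f hf hef
  obtain ⟨v, hvS, hv⟩ := hS e he f hf hef
  refine ⟨v, hvS, fun hmem => hv ?_⟩
  rw [truncEdgeDist, truncEdgeDist, edgeEDist_eq_ite (hG e he v), edgeEDist_eq_ite (hG f hf v)]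
  simp only [hmem]

lemma separatesEdges_univ [Fintype V] : G.SeparatesEdges univ := by
  intro e _ f _ hef
  by_contra! h
  exact hef (Sym2.ext fun v => h v (mem_univ v))

lemma exists_isEdgeResolving_thEdim_eq [Fintype V] :
    ∃ r S, IsEdgeResolving G r S ∧ thEdim G = r + #S := by
  obtain ⟨r, hr⟩ := Nat.sInf_mem (s := {m | ∃ r : ℕ, m = r + edimr G r}) ⟨_, 0, rfl⟩
  obtain ⟨S, hS, hcard⟩ := Nat.sInf_mem (s := {k | ∃ S : Finset V, IsEdgeResolving G r S ∧ #S = k})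
    ⟨_, univ, separatesEdges_univ.isEdgeResolving r, rfl⟩
  exact ⟨r, S, hS, hcard ▸ hr⟩

lemma thEdim_le {r : ℕ} {S : Finset V} (hS : IsEdgeResolving G r S) : thEdim G ≤ r + #S :=
  calc thEdim G ≤ r + edimr G r := Nat.sInf_le ⟨r, rfl⟩
    _ ≤ r + #S := by gcongr; exact Nat.sInf_le ⟨S, hS, rfl⟩

lemma mem_of_forall_mem_iff_of_cliqueFree (hG : G.CliqueFree 3) {u w : V} (huw : G.Adj u w)
    {e f : Sym2 V} (he : e ∈ G.edgeSet) (hf : f ∈ G.edgeSet)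
    (h : ∀ v, v ≠ u → v ≠ w → (v ∈ e ↔ v ∈ f)) (hu : u ∈ e) : u ∈ f := by
  classical
  obtain ⟨x, rfl⟩ := Sym2.mem_iff_exists.mp hu
  induction f using Sym2.ind with
  | _ c d =>
    by_contra hu
    obtain ⟨hcu, hdu⟩ : c ≠ u ∧ d ≠ u := by simpa [eq_comm] using hu
    have hc : c = x ∨ c = w := by
      by_contra! hc
      simpa [hcu, hc.1] using (h c hcu hc.2).mpr (Sym2.mem_mk_left c d)
    have hd : d = x ∨ d = w := by
      by_contra! hd
      simpa [hdu, hd.1] using (h d hdu hd.2).mpr (Sym2.mem_mk_right c d)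
    have hxw : G.Adj x w := by
      rcases hc with rfl | rfl <;> rcases hd with rfl | rfl
      exacts [(hf.ne rfl).elim, hf, hf.symm, (hf.ne rfl).elim]
    exact hG {u, x, w} (is3Clique_triple_iff.mpr ⟨he, huw, hxw⟩)

lemma separatesEdges_compl_of_cliqueFree [Fintype V] [DecidableEq V] (hG : G.CliqueFree 3)
    {u w : V} (huw : G.Adj u w) : G.SeparatesEdges (univ \ {u, w}) := by
  intro e he f hf hef
  by_contra! h
  have hK : ∀ v, v ≠ u → v ≠ w → (v ∈ e ↔ v ∈ f) := fun v hvu hvw => h v (by simp [hvu, hvw])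
  have hK' : ∀ v, v ≠ w → v ≠ u → (v ∈ e ↔ v ∈ f) := fun v hvw hvu => hK v hvu hvw
  refine hef (Sym2.ext fun v => ?_)
  by_cases hvu : v = u
  · subst hvu
    exact ⟨mem_of_forall_mem_iff_of_cliqueFree hG huw he hf hK,
      mem_of_forall_mem_iff_of_cliqueFree hG huw hf he fun v h₁ h₂ => (hK v h₁ h₂).symm⟩
  by_cases hvw : v = w
  · subst hvw
    exact ⟨mem_of_forall_mem_iff_of_cliqueFree hG huw.symm he hf hK',
      mem_of_forall_mem_iff_of_cliqueFree hG huw.symm hf he fun v h₁ h₂ => (hK' v h₁ h₂).symm⟩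
  exact hK v hvu hvw

lemma thEdim_le_card_sub_two_of_cliqueFree [Fintype V] (hG : G.CliqueFree 3) {u w : V}
    (huw : G.Adj u w) : thEdim G ≤ Fintype.card V - 2 := by
  classical
  calc thEdim G ≤ 0 + #(univ \ {u, w}) :=
        thEdim_le ((separatesEdges_compl_of_cliqueFree hG huw).isEdgeResolving 0)
    _ = Fintype.card V - 2 := by rw [zero_add, card_sdiff_of_subset (subset_univ _),
        card_univ, card_pair huw.ne]

section CompleteBipartite

variable {α β : Type*}

lemma completeBipartiteGraph_edgeEDist_le_one :
    ∀ e ∈ (completeBipartiteGraph α β).edgeSet, ∀ v,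
      edgeEDist (completeBipartiteGraph α β) e v ≤ 1 := by
  intro e he v
  induction e using Sym2.ind with
  | _ x y =>
    rcases x with a | i <;> rcases y with b | j <;>
      simp only [mem_edgeSet, completeBipartiteGraph_adj, Sum.isLeft_inl, Sum.isLeft_inr,
        Sum.isRight_inl, Sum.isRight_inr, Bool.false_eq_true, and_false, and_true, or_self]
        at he <;>
      rcases v with c | k
    exacts [edgeEDist_le_one_of_adj (Sym2.mem_mk_right _ _) (by simp),
      edgeEDist_le_one_of_adj (Sym2.mem_mk_left _ _) (by simp),
      edgeEDist_le_one_of_adj (Sym2.mem_mk_left _ _) (by simp),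
      edgeEDist_le_one_of_adj (Sym2.mem_mk_right _ _) (by simp)]

lemma inr_mem_or_inr_mem_of_separatesEdges {S : Finset (α ⊕ β)}
    (hS : (completeBipartiteGraph α β).SeparatesEdges S) (a : α) {i j : β} (hij : i ≠ j) :
    Sum.inr i ∈ S ∨ Sum.inr j ∈ S := by
  obtain ⟨v, hvS, hv⟩ := hS s(Sum.inl a, Sum.inr i) (by simp) s(Sum.inl a, Sum.inr j) (by simp)
    (by simp [hij])
  rcases v with b | k
  · simp at hv
  · by_cases hki : k = i
    · exact Or.inl (hki ▸ hvS)
    · exact Or.inr (by simp_all)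

lemma card_sub_one_le_card_of_separatesEdges [Fintype β] {S : Finset (α ⊕ β)}
    (hS : (completeBipartiteGraph α β).SeparatesEdges S) (a : α) :
    Fintype.card β - 1 ≤ #S := by
  classical
  have hmissing : #(univ.filter fun j : β => Sum.inr j ∉ S) ≤ 1 :=
    card_le_one.mpr fun i hi j hj => by
      by_contra hij
      rcases inr_mem_or_inr_mem_of_separatesEdges hS a hij with h | h <;> simp_all
  have hpresent : #(univ.filter fun j : β => Sum.inr j ∈ S) ≤ #S :=
    card_le_card_of_injOn Sum.inr (fun j hj => (mem_filter.mp hj).2)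
      Sum.inr_injective.injOn
  have hsplit := card_filter_add_card_filter_not (s := univ) (p := fun j : β => Sum.inr j ∈ S)
  rw [card_univ] at hsplit
  omega

lemma card_sub_one_le_thEdim_completeBipartiteGraph [Fintype α] [Fintype β] (a : α) :
    Fintype.card β - 1 ≤ thEdim (completeBipartiteGraph α β) := by
  obtain ⟨r, S, hS, hth⟩ := exists_isEdgeResolving_thEdim_eq (G := completeBipartiteGraph α β)
  have := card_sub_one_le_card_of_separatesEdges
    (hS.separatesEdges completeBipartiteGraph_edgeEDist_le_one) a
  omega

end CompleteBipartite

end SimpleGraph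

/-- The maximum edge metric dimension throttling number of a tree of
order `n ≥ 2` is `n - 2`: every such tree satisfies `th_edim(T) ≤ n - 2`, and the
star `K_{1,n-1}` attains `th_edim = n - 2`. -/
theorem stmt16 (n : ℕ) (hn : 2 ≤ n) :
    (∀ (V : Type) [Fintype V] (T : SimpleGraph V), T.Connected → T.IsAcyclic →
      Fintype.card V = n → thEdim T ≤ n - 2) ∧
    thEdim (completeBipartiteGraph (Fin 1) (Fin (n - 1))) = n - 2 := by
  refine ⟨fun V _ T hconn hacyc hcard => ?_, le_antisymm ?_ ?_⟩
  · have : Nontrivial V := Fintype.one_lt_card_iff_nontrivial.mp (by omega)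
    obtain ⟨w, huw⟩ := hconn.preconnected.exists_adj_of_nontrivial hconn.nonempty.some
    exact hcard ▸ thEdim_le_card_sub_two_of_cliqueFree (hacyc.cliqueFree le_rfl) huw
  · have hleaf : 0 < n - 1 := by omega
    have hstar := thEdim_le_card_sub_two_of_cliqueFree
      ((CompleteBipartiteGraph.bicoloring _ _).colorable.cliqueFree (by simp))
      (by simp : (completeBipartiteGraph (Fin 1) (Fin (n - 1))).Adj (.inl 0) (.inr ⟨0, hleaf⟩))
    simp only [Fintype.card_sum, Fintype.card_fin] at hstar
    omega
  · have hstar := card_sub_one_le_thEdim_completeBipartiteGraph (β := Fin (n - 1)) (0 : Fin 1)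
    simp only [Fintype.card_fin] at hstar
    omega
end

section
/- For all positive integers s and t, the mixed metric dimension throttling number of the complete bipartite graph K_{s,t} satisfies th_mdim(K_{s,t}) = s + t if min(s,t) ≤ 2, and th_mdim(K_{s,t}) = s + t − 1 otherwise. -/
open SimpleGraph Filter

/-! ### Auxiliary development -/

section Aux

open Finset

abbrev KB (s t : ℕ) : SimpleGraph (Fin s ⊕ Fin t) := completeBipartiteGraph (Fin s) (Fin t)

variable {s t : ℕ}

lemma kb_edist_lr (a : Fin s) (b : Fin t) : (KB s t).edist (.inl a) (.inr b) = 1 := by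
  rw [edist_eq_one_iff_adj]; simp

lemma kb_edist_rl (a : Fin s) (b : Fin t) : (KB s t).edist (.inr b) (.inl a) = 1 := by
  rw [edist_comm]; exact kb_edist_lr a b

lemma kb_edist_ll (ht : 1 ≤ t) {a a' : Fin s} (h : a ≠ a') :
    (KB s t).edist (.inl a) (.inl a') = 2 := by
  apply le_antisymm
  · have hle := edist_le (G := KB s t)
      (Walk.cons (u := Sum.inl a) (v := Sum.inr ⟨0, ht⟩) (by simp)
        (Walk.cons (w := Sum.inl a') (by simp) Walk.nil))
    simpa using hle
  · have h0 : (KB s t).edist (.inl a) (.inl a') ≠ 0 := by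
      simp [edist_eq_zero_iff, h]
    have h1 : (KB s t).edist (.inl a) (.inl a') ≠ 1 := by
      simp [edist_eq_one_iff_adj]
    have h2 : 1 < (KB s t).edist (.inl a) (.inl a') :=
      lt_of_le_of_ne (ENat.one_le_iff_ne_zero.mpr h0) (Ne.symm h1)
    have := Order.add_one_le_of_lt h2
    simpa [one_add_one_eq_two] using this

lemma kb_edist_rr (hs : 1 ≤ s) {b b' : Fin t} (h : b ≠ b') :
    (KB s t).edist (.inr b) (.inr b') = 2 := by
  apply le_antisymm
  · have hle := edist_le (G := KB s t)
      (Walk.cons (u := Sum.inr b) (v := Sum.inl ⟨0, hs⟩) (by simp)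
        (Walk.cons (w := Sum.inr b') (by simp) Walk.nil))
    simpa using hle
  · have h0 : (KB s t).edist (.inr b) (.inr b') ≠ 0 := by
      simp [edist_eq_zero_iff, h]
    have h1 : (KB s t).edist (.inr b) (.inr b') ≠ 1 := by
      simp [edist_eq_one_iff_adj]
    have h2 : 1 < (KB s t).edist (.inr b) (.inr b') :=
      lt_of_le_of_ne (ENat.one_le_iff_ne_zero.mpr h0) (Ne.symm h1)
    have := Order.add_one_le_of_lt h2
    simpa [one_add_one_eq_two] using this

lemma kb_vertex_edist_le_two (hs : 1 ≤ s) (ht : 1 ≤ t) (u v : Fin s ⊕ Fin t) :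
    (KB s t).edist u v ≤ 2 := by
  rcases u with a | b <;> rcases v with a' | b'
  · rcases eq_or_ne a a' with rfl | h
    · simp [edist_self]
    · rw [kb_edist_ll ht h]
  · rw [kb_edist_lr]; norm_num
  · rw [kb_edist_rl]; norm_num
  · rcases eq_or_ne b b' with rfl | h
    · simp [edist_self]
    · rw [kb_edist_rr hs h]

lemma edgeEDist_mk {V : Type*} (G : SimpleGraph V) (x y v : V) :
    edgeEDist G s(x, y) v = min (G.edist x v) (G.edist y v) := rfl

lemma itemEDist_inl {V : Type*} (G : SimpleGraph V) (u v : V) :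
    itemEDist G (Sum.inl u) v = G.edist u v := rfl

lemma itemEDist_inr {V : Type*} (G : SimpleGraph V) (e : G.edgeSet) (v : V) :
    itemEDist G (Sum.inr e) v = edgeEDist G (e : Sym2 V) v := rfl

lemma kb_mem_edgeSet (a : Fin s) (b : Fin t) :
    s(Sum.inl a, Sum.inr b) ∈ (KB s t).edgeSet := by simp

lemma kb_edge_form {e : Sym2 (Fin s ⊕ Fin t)} (he : e ∈ (KB s t).edgeSet) :
    ∃ a b, e = s(Sum.inl a, Sum.inr b) := by
  induction e using Sym2.ind with
  | _ x y =>
    rw [SimpleGraph.mem_edgeSet] at he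
    rcases x with a | b <;> rcases y with a' | b'
    · simp at he
    · exact ⟨a, b', rfl⟩
    · exact ⟨a', b, Sym2.eq_swap⟩
    · simp at he

lemma kb_edgeEDist_endl (a : Fin s) (b : Fin t) :
    edgeEDist (KB s t) s(Sum.inl a, Sum.inr b) (Sum.inl a) = 0 := by
  rw [edgeEDist_mk]
  simp [edist_self]

lemma kb_edgeEDist_endr (a : Fin s) (b : Fin t) :
    edgeEDist (KB s t) s(Sum.inl a, Sum.inr b) (Sum.inr b) = 0 := by
  rw [edgeEDist_mk]
  simp [edist_self]

lemma kb_edgeEDist_ne (a : Fin s) (b : Fin t) {v : Fin s ⊕ Fin t}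
    (h1 : v ≠ Sum.inl a) (h2 : v ≠ Sum.inr b) :
    edgeEDist (KB s t) s(Sum.inl a, Sum.inr b) v = 1 := by
  rw [edgeEDist_mk]
  rcases v with a' | b'
  · rw [kb_edist_rl]
    have hne : Sum.inl a ≠ (Sum.inl a' : Fin s ⊕ Fin t) := fun h => h1 (by rw [h])
    have h0 : (KB s t).edist (.inl a) (.inl a') ≠ 0 := by
      simp [edist_eq_zero_iff, hne]
    exact min_eq_right (ENat.one_le_iff_ne_zero.mpr h0)
  · rw [kb_edist_lr]
    have hne : Sum.inr b ≠ (Sum.inr b' : Fin s ⊕ Fin t) := fun h => h2 (by rw [h])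
    have h0 : (KB s t).edist (.inr b) (.inr b') ≠ 0 := by
      simp [edist_eq_zero_iff, hne]
    exact min_eq_left (ENat.one_le_iff_ne_zero.mpr h0)

lemma fin_exists_ne_ne {n : ℕ} (hn : 3 ≤ n) (x y : Fin n) : ∃ z : Fin n, z ≠ x ∧ z ≠ y := by
  by_contra h
  push_neg at h
  have hsub : (Finset.univ : Finset (Fin n)) ⊆ {x, y} := by
    intro z _
    simp only [Finset.mem_insert, Finset.mem_singleton]
    rcases eq_or_ne z x with hz | hz
    · exact Or.inl hz
    · exact Or.inr (h z hz)
  have h1 : n ≤ ({x, y} : Finset (Fin n)).card := by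
    simpa using Finset.card_le_card hsub
  have h2 : ({x, y} : Finset (Fin n)).card ≤ 2 :=
    (Finset.card_insert_le _ _).trans (by simp)
  omega

lemma trunc_ne_of {d1 d2 : ℕ∞} {r : ℕ} (h1 : d1 = 0) (h2 : d2 ≠ 0) :
    min d1 ((r : ℕ∞) + 1) ≠ min d2 ((r : ℕ∞) + 1) := by
  subst h1
  rw [min_eq_left zero_le]
  intro hc
  have hpos : 0 < min d2 ((r : ℕ∞) + 1) := by
    rw [lt_min_iff]
    exact ⟨pos_iff_ne_zero.mpr h2, by exact_mod_cast Nat.succ_pos r⟩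
  exact absurd hc.symm (ne_of_gt hpos)

lemma mdimr_le {V : Type*} {G : SimpleGraph V} {r : ℕ} {S : Finset V}
    (hS : IsMixedResolving G r S) : mdimr G r ≤ S.card :=
  Nat.sInf_le ⟨S, hS, rfl⟩

lemma le_mdimr {V : Type*} {G : SimpleGraph V} {r : ℕ} {c : ℕ}
    (hne : ∃ S, IsMixedResolving G r S)
    (h : ∀ S : Finset V, IsMixedResolving G r S → c ≤ S.card) : c ≤ mdimr G r := by
  obtain ⟨S0, hS0⟩ := hne
  refine le_csInf ⟨S0.card, S0, hS0, rfl⟩ ?_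
  rintro k ⟨S, hS, rfl⟩
  exact h S hS

lemma thMdim_le {V : Type*} (G : SimpleGraph V) (r : ℕ) : thMdim G ≤ r + mdimr G r :=
  Nat.sInf_le ⟨r, rfl⟩

lemma le_thMdim {V : Type*} (G : SimpleGraph V) (c : ℕ) (h : ∀ r, c ≤ r + mdimr G r) :
    c ≤ thMdim G :=
  le_csInf ⟨0 + mdimr G 0, 0, rfl⟩ (by rintro m ⟨r, rfl⟩; exact h r)

lemma kb_univ_resolving (r : ℕ) : IsMixedResolving (KB s t) r (Finset.univ) := by
  have key : ∀ t₁ t₂ : (Fin s ⊕ Fin t) ⊕ (KB s t).edgeSet, t₁ ≠ t₂ →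
      ∃ v, (itemEDist (KB s t) t₁ v = 0 ∧ itemEDist (KB s t) t₂ v ≠ 0) ∨
           (itemEDist (KB s t) t₂ v = 0 ∧ itemEDist (KB s t) t₁ v ≠ 0) := by
    have mixed : ∀ (x : Fin s ⊕ Fin t) (e : Sym2 (Fin s ⊕ Fin t))
        (he : e ∈ (KB s t).edgeSet),
        ∃ v, (edist (KB s t) x v = 0 ∧ edgeEDist (KB s t) e v ≠ 0) ∨
             (edgeEDist (KB s t) e v = 0 ∧ edist (KB s t) x v ≠ 0) := by
      intro x e he
      obtain ⟨a, b, rfl⟩ := kb_edge_form he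
      rcases eq_or_ne x (Sum.inl a) with rfl | hxa
      · refine ⟨Sum.inr b, Or.inr ⟨kb_edgeEDist_endr a b, ?_⟩⟩
        rw [kb_edist_lr]; norm_num
      · rcases eq_or_ne x (Sum.inr b) with rfl | hxb
        · refine ⟨Sum.inl a, Or.inr ⟨kb_edgeEDist_endl a b, ?_⟩⟩
          rw [kb_edist_rl]; norm_num
        · refine ⟨x, Or.inl ⟨edist_self, ?_⟩⟩
          rw [kb_edgeEDist_ne a b hxa hxb]; norm_num
    rintro (x | ⟨e, he⟩) (y | ⟨f, hf⟩) hne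
    · have hxy : x ≠ y := fun h => hne (by rw [h])
      refine ⟨x, Or.inl ⟨edist_self, ?_⟩⟩
      rw [itemEDist_inl, edist_comm]
      simp [edist_eq_zero_iff, hxy]
    · simpa [itemEDist_inl, itemEDist_inr] using mixed x f hf
    · obtain ⟨v, hv⟩ := mixed y e he
      exact ⟨v, by simpa [itemEDist_inl, itemEDist_inr, or_comm] using hv⟩
    · have hef : e ≠ f := by intro h; subst h; exact hne rfl
      obtain ⟨a, b, rfl⟩ := kb_edge_form he
      obtain ⟨a', b', rfl⟩ := kb_edge_form hf
      have hab : a ≠ a' ∨ b ≠ b' := by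
        by_contra hc
        push_neg at hc
        exact hef (by rw [hc.1, hc.2])
      rcases hab with haa | hbb
      · refine ⟨Sum.inl a, Or.inl ⟨?_, ?_⟩⟩
        · simpa [itemEDist_inr] using kb_edgeEDist_endl a b
        · have h1 := kb_edgeEDist_ne a' b' (v := Sum.inl a) (by simp [haa]) (by simp)
          simp [itemEDist_inr, h1]
      · refine ⟨Sum.inr b, Or.inl ⟨?_, ?_⟩⟩
        · simpa [itemEDist_inr] using kb_edgeEDist_endr a b
        · have h1 := kb_edgeEDist_ne a' b' (v := Sum.inr b) (by simp) (by simp [hbb])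
          simp [itemEDist_inr, h1]
  intro t₁ t₂ hne
  obtain ⟨v, hv⟩ := key t₁ t₂ hne
  refine ⟨v, Finset.mem_univ v, ?_⟩
  unfold truncItemDist
  rcases hv with ⟨h1, h2⟩ | ⟨h1, h2⟩
  · exact trunc_ne_of h1 h2
  · exact (trunc_ne_of h1 h2).symm

lemma kb_itemEDist_le_two (hs : 1 ≤ s) (ht : 1 ≤ t)
    (it : (Fin s ⊕ Fin t) ⊕ (KB s t).edgeSet) (v : Fin s ⊕ Fin t) :
    itemEDist (KB s t) it v ≤ 2 := by
  rcases it with u | ⟨e, he⟩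
  · exact kb_vertex_edist_le_two hs ht u v
  · obtain ⟨a, b, rfl⟩ := kb_edge_form he
    rw [itemEDist_inr]
    exact (min_le_left _ _).trans (kb_vertex_edist_le_two hs ht _ v)

lemma kb_resolve_exact (hs : 1 ≤ s) (ht : 1 ≤ t) {r : ℕ} (hr : 1 ≤ r)
    {S : Finset (Fin s ⊕ Fin t)} (hS : IsMixedResolving (KB s t) r S) :
    ∀ t₁ t₂ : (Fin s ⊕ Fin t) ⊕ (KB s t).edgeSet, t₁ ≠ t₂ →
      ∃ v ∈ S, itemEDist (KB s t) t₁ v ≠ itemEDist (KB s t) t₂ v := by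
  intro t₁ t₂ hne
  obtain ⟨v, hv, hd⟩ := hS t₁ t₂ hne
  refine ⟨v, hv, fun h => hd ?_⟩
  have h2 : (2 : ℕ∞) ≤ (r : ℕ∞) + 1 := by
    have : ((1 : ℕ) : ℕ∞) ≤ (r : ℕ∞) := by exact_mod_cast hr
    calc (2 : ℕ∞) = 1 + 1 := by norm_num
    _ ≤ (r : ℕ∞) + 1 := by exact add_le_add_left (by exact_mod_cast hr) 1
  unfold truncItemDist
  rw [min_eq_left ((kb_itemEDist_le_two hs ht t₁ v).trans h2),
    min_eq_left ((kb_itemEDist_le_two hs ht t₂ v).trans h2), h]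

lemma kb_pairL (hs : 1 ≤ s) (ht : 1 ≤ t) {r : ℕ} (hr : 1 ≤ r)
    {S : Finset (Fin s ⊕ Fin t)} (hS : IsMixedResolving (KB s t) r S)
    {a a' : Fin s} (haa : a ≠ a') :
    Sum.inl a ∈ S ∨ Sum.inl a' ∈ S := by
  set b0 : Fin t := ⟨0, ht⟩
  have hne : (Sum.inr ⟨s(Sum.inl a, Sum.inr b0), kb_mem_edgeSet a b0⟩ :
      (Fin s ⊕ Fin t) ⊕ (KB s t).edgeSet) ≠
      Sum.inr ⟨s(Sum.inl a', Sum.inr b0), kb_mem_edgeSet a' b0⟩ := by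
    simp [Sym2.eq_iff, haa]
  obtain ⟨v, hv, hd⟩ := kb_resolve_exact hs ht hr hS _ _ hne
  rw [itemEDist_inr, itemEDist_inr] at hd
  rcases v with c | d
  · rcases eq_or_ne c a with rfl | hca
    · exact Or.inl hv
    · rcases eq_or_ne c a' with rfl | hca'
      · exact Or.inr hv
      · exfalso
        exact hd (by rw [kb_edgeEDist_ne a b0 (by simp [hca]) (by simp),
          kb_edgeEDist_ne a' b0 (by simp [hca']) (by simp)])
  · exfalso
    rcases eq_or_ne d b0 with rfl | hd0
    · exact hd (by rw [kb_edgeEDist_endr, kb_edgeEDist_endr])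
    · exact hd (by rw [kb_edgeEDist_ne a b0 (by simp) (by simp [hd0]),
        kb_edgeEDist_ne a' b0 (by simp) (by simp [hd0])])

lemma kb_pairR (hs : 1 ≤ s) (ht : 1 ≤ t) {r : ℕ} (hr : 1 ≤ r)
    {S : Finset (Fin s ⊕ Fin t)} (hS : IsMixedResolving (KB s t) r S)
    {b b' : Fin t} (hbb : b ≠ b') :
    Sum.inr b ∈ S ∨ Sum.inr b' ∈ S := by
  set a0 : Fin s := ⟨0, hs⟩
  have hne : (Sum.inr ⟨s(Sum.inl a0, Sum.inr b), kb_mem_edgeSet a0 b⟩ :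
      (Fin s ⊕ Fin t) ⊕ (KB s t).edgeSet) ≠
      Sum.inr ⟨s(Sum.inl a0, Sum.inr b'), kb_mem_edgeSet a0 b'⟩ := by
    simp [Sym2.eq_iff, hbb]
  obtain ⟨v, hv, hd⟩ := kb_resolve_exact hs ht hr hS _ _ hne
  rw [itemEDist_inr, itemEDist_inr] at hd
  rcases v with c | d
  · exfalso
    rcases eq_or_ne c a0 with rfl | hc0
    · exact hd (by rw [kb_edgeEDist_endl, kb_edgeEDist_endl])
    · exact hd (by rw [kb_edgeEDist_ne a0 b (by simp [hc0]) (by simp),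
        kb_edgeEDist_ne a0 b' (by simp [hc0]) (by simp)])
  · rcases eq_or_ne d b with rfl | hdb
    · exact Or.inl hv
    · rcases eq_or_ne d b' with rfl | hdb'
      · exact Or.inr hv
      · exfalso
        exact hd (by rw [kb_edgeEDist_ne a0 b (by simp) (by simp [hdb]),
          kb_edgeEDist_ne a0 b' (by simp) (by simp [hdb'])])

lemma kb_allL (hs : 1 ≤ s) (ht : 1 ≤ t) {r : ℕ} (hr : 1 ≤ r)
    {S : Finset (Fin s ⊕ Fin t)} (hS : IsMixedResolving (KB s t) r S)
    (hone : ∀ b b' : Fin t, b = b') (a : Fin s) : Sum.inl a ∈ S := by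
  set b0 : Fin t := ⟨0, ht⟩
  have hne : (Sum.inr ⟨s(Sum.inl a, Sum.inr b0), kb_mem_edgeSet a b0⟩ :
      (Fin s ⊕ Fin t) ⊕ (KB s t).edgeSet) ≠ Sum.inl (Sum.inr b0) := by
    simp
  obtain ⟨v, hv, hd⟩ := kb_resolve_exact hs ht hr hS _ _ hne
  rw [itemEDist_inr, itemEDist_inl] at hd
  rcases v with c | d
  · rcases eq_or_ne c a with rfl | hca
    · exact hv
    · exact absurd (by rw [kb_edgeEDist_ne a b0 (by simp [hca]) (by simp),
        kb_edist_rl]) hd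
  · exact absurd (by rw [hone d b0, kb_edgeEDist_endr, edist_self]) hd

lemma kb_allR (hs : 1 ≤ s) (ht : 1 ≤ t) {r : ℕ} (hr : 1 ≤ r)
    {S : Finset (Fin s ⊕ Fin t)} (hS : IsMixedResolving (KB s t) r S)
    (hone : ∀ a a' : Fin s, a = a') (b : Fin t) : Sum.inr b ∈ S := by
  set a0 : Fin s := ⟨0, hs⟩
  have hne : (Sum.inr ⟨s(Sum.inl a0, Sum.inr b), kb_mem_edgeSet a0 b⟩ :
      (Fin s ⊕ Fin t) ⊕ (KB s t).edgeSet) ≠ Sum.inl (Sum.inl a0) := by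
    simp
  obtain ⟨v, hv, hd⟩ := kb_resolve_exact hs ht hr hS _ _ hne
  rw [itemEDist_inr, itemEDist_inl] at hd
  rcases v with c | d
  · exact absurd (by rw [hone c a0, kb_edgeEDist_endl, edist_self]) hd
  · rcases eq_or_ne d b with rfl | hdb
    · exact hv
    · exact absurd (by rw [kb_edgeEDist_ne a0 b (by simp) (by simp [hdb]),
        kb_edist_lr]) hd

lemma kb_not_both_missing_t2 (hs : 1 ≤ s) (ht : 1 ≤ t) {r : ℕ} (hr : 1 ≤ r)
    {S : Finset (Fin s ⊕ Fin t)} (hS : IsMixedResolving (KB s t) r S)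
    {b0 b1 : Fin t} (hb01 : b0 ≠ b1) (htwo : ∀ b : Fin t, b = b0 ∨ b = b1)
    {a0 : Fin s} (ha0 : Sum.inl a0 ∉ S) (hb0 : Sum.inr b0 ∉ S) : False := by
  have hne : (Sum.inr ⟨s(Sum.inl a0, Sum.inr b1), kb_mem_edgeSet a0 b1⟩ :
      (Fin s ⊕ Fin t) ⊕ (KB s t).edgeSet) ≠ Sum.inl (Sum.inr b1) := by
    simp
  obtain ⟨v, hv, hd⟩ := kb_resolve_exact hs ht hr hS _ _ hne
  rw [itemEDist_inr, itemEDist_inl] at hd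
  rcases v with c | d
  · rcases eq_or_ne c a0 with rfl | hc0
    · exact ha0 hv
    · exact hd (by rw [kb_edgeEDist_ne a0 b1 (by simp [hc0]) (by simp), kb_edist_rl])
  · rcases htwo d with rfl | rfl
    · exact hb0 hv
    · exact hd (by rw [kb_edgeEDist_endr, edist_self])

lemma kb_not_both_missing_s2 (hs : 1 ≤ s) (ht : 1 ≤ t) {r : ℕ} (hr : 1 ≤ r)
    {S : Finset (Fin s ⊕ Fin t)} (hS : IsMixedResolving (KB s t) r S)
    {a0 a1 : Fin s} (ha01 : a0 ≠ a1) (htwo : ∀ a : Fin s, a = a0 ∨ a = a1)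
    {b0 : Fin t} (hb0 : Sum.inr b0 ∉ S) (ha0 : Sum.inl a0 ∉ S) : False := by
  have hne : (Sum.inr ⟨s(Sum.inl a1, Sum.inr b0), kb_mem_edgeSet a1 b0⟩ :
      (Fin s ⊕ Fin t) ⊕ (KB s t).edgeSet) ≠ Sum.inl (Sum.inl a1) := by
    simp
  obtain ⟨v, hv, hd⟩ := kb_resolve_exact hs ht hr hS _ _ hne
  rw [itemEDist_inr, itemEDist_inl] at hd
  rcases v with c | d
  · rcases htwo c with rfl | rfl
    · exact ha0 hv
    · exact hd (by rw [kb_edgeEDist_endl, edist_self])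
  · rcases eq_or_ne d b0 with rfl | hd0
    · exact hb0 hv
    · exact hd (by rw [kb_edgeEDist_ne a1 b0 (by simp) (by simp [hd0]), kb_edist_lr])

lemma kb_card_total (S : Finset (Fin s ⊕ Fin t)) : S.card + Sᶜ.card = s + t := by
  have := Finset.card_add_card_compl S
  simpa using this

lemma kb_compl_le_two (hs : 1 ≤ s) (ht : 1 ≤ t) {r : ℕ} (hr : 1 ≤ r)
    {S : Finset (Fin s ⊕ Fin t)} (hS : IsMixedResolving (KB s t) r S) :
    Sᶜ.card ≤ 2 := by
  classical
  have hL : ((Sᶜ).filter (fun x => x.isLeft = true)).card ≤ 1 := by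
    rw [Finset.card_le_one]
    intro x hx y hy
    rw [Finset.mem_filter, Finset.mem_compl] at hx hy
    rcases x with a | b
    swap
    · simp at hx
    rcases y with a' | b'
    swap
    · simp at hy
    rcases eq_or_ne a a' with rfl | haa
    · rfl
    · rcases kb_pairL hs ht hr hS haa with h | h
      · exact absurd h hx.1
      · exact absurd h hy.1
  have hR : ((Sᶜ).filter (fun x => ¬ x.isLeft = true)).card ≤ 1 := by
    rw [Finset.card_le_one]
    intro x hx y hy
    rw [Finset.mem_filter, Finset.mem_compl] at hx hy
    rcases x with a | b
    · simp at hx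
    rcases y with a' | b'
    · simp at hy
    rcases eq_or_ne b b' with rfl | hbb
    · rfl
    · rcases kb_pairR hs ht hr hS hbb with h | h
      · exact absurd h hx.1
      · exact absurd h hy.1
  have hsum := Finset.card_filter_add_card_filter_not
    (s := Sᶜ) (p := fun x => x.isLeft = true)
  omega

lemma kb_compl_le_one_t2 (hs : 1 ≤ s) (ht : 1 ≤ t) {r : ℕ} (hr : 1 ≤ r)
    {S : Finset (Fin s ⊕ Fin t)} (hS : IsMixedResolving (KB s t) r S)
    {b0 b1 : Fin t} (hb01 : b0 ≠ b1) (htwo : ∀ b : Fin t, b = b0 ∨ b = b1) :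
    Sᶜ.card ≤ 1 := by
  have hmix : ∀ (a : Fin s) (d : Fin t), Sum.inl a ∉ S → Sum.inr d ∉ S → False := by
    intro a d ha hd
    rcases htwo d with rfl | rfl
    · exact kb_not_both_missing_t2 hs ht hr hS hb01 htwo ha hd
    · exact kb_not_both_missing_t2 hs ht hr hS hb01.symm
        (fun b => (htwo b).symm) ha hd
  rw [Finset.card_le_one]
  intro x hx y hy
  rw [Finset.mem_compl] at hx hy
  rcases x with a | b <;> rcases y with a' | b'
  · rcases eq_or_ne a a' with rfl | haa
    · rfl
    · rcases kb_pairL hs ht hr hS haa with h | h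
      · exact absurd h hx
      · exact absurd h hy
  · exact (hmix a b' hx hy).elim
  · exact (hmix a' b hy hx).elim
  · rcases eq_or_ne b b' with rfl | hbb
    · rfl
    · rcases kb_pairR hs ht hr hS hbb with h | h
      · exact absurd h hx
      · exact absurd h hy

lemma kb_compl_le_one_s2 (hs : 1 ≤ s) (ht : 1 ≤ t) {r : ℕ} (hr : 1 ≤ r)
    {S : Finset (Fin s ⊕ Fin t)} (hS : IsMixedResolving (KB s t) r S)
    {a0 a1 : Fin s} (ha01 : a0 ≠ a1) (htwo : ∀ a : Fin s, a = a0 ∨ a = a1) :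
    Sᶜ.card ≤ 1 := by
  have hmix : ∀ (c : Fin s) (d : Fin t), Sum.inl c ∉ S → Sum.inr d ∉ S → False := by
    intro c d ha hd
    rcases htwo c with rfl | rfl
    · exact kb_not_both_missing_s2 hs ht hr hS ha01 htwo hd ha
    · exact kb_not_both_missing_s2 hs ht hr hS ha01.symm
        (fun a => (htwo a).symm) hd ha
  rw [Finset.card_le_one]
  intro x hx y hy
  rw [Finset.mem_compl] at hx hy
  rcases x with a | b <;> rcases y with a' | b'
  · rcases eq_or_ne a a' with rfl | haa
    · rfl
    · rcases kb_pairL hs ht hr hS haa with h | h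
      · exact absurd h hx
      · exact absurd h hy
  · exact (hmix a b' hx hy).elim
  · exact (hmix a' b hy hx).elim
  · rcases eq_or_ne b b' with rfl | hbb
    · rfl
    · rcases kb_pairR hs ht hr hS hbb with h | h
      · exact absurd h hx
      · exact absurd h hy

lemma kb_card_t1 (hs : 1 ≤ s) (ht : 1 ≤ t) {r : ℕ} (hr : 1 ≤ r)
    {S : Finset (Fin s ⊕ Fin t)} (hS : IsMixedResolving (KB s t) r S)
    (hone : ∀ b b' : Fin t, b = b') : s ≤ S.card := by
  have hsub : (Finset.univ.image (Sum.inl : Fin s → Fin s ⊕ Fin t)) ⊆ S := by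
    intro x hx
    simp only [Finset.mem_image, Finset.mem_univ, true_and] at hx
    obtain ⟨a, rfl⟩ := hx
    exact kb_allL hs ht hr hS hone a
  calc s = (Finset.univ.image (Sum.inl : Fin s → Fin s ⊕ Fin t)).card := by
        rw [Finset.card_image_of_injective _ Sum.inl_injective]; simp
    _ ≤ S.card := Finset.card_le_card hsub

lemma kb_card_s1 (hs : 1 ≤ s) (ht : 1 ≤ t) {r : ℕ} (hr : 1 ≤ r)
    {S : Finset (Fin s ⊕ Fin t)} (hS : IsMixedResolving (KB s t) r S)
    (hone : ∀ a a' : Fin s, a = a') : t ≤ S.card := by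
  have hsub : (Finset.univ.image (Sum.inr : Fin t → Fin s ⊕ Fin t)) ⊆ S := by
    intro x hx
    simp only [Finset.mem_image, Finset.mem_univ, true_and] at hx
    obtain ⟨b, rfl⟩ := hx
    exact kb_allR hs ht hr hS hone b
  calc t = (Finset.univ.image (Sum.inr : Fin t → Fin s ⊕ Fin t)).card := by
        rw [Finset.card_image_of_injective _ Sum.inr_injective]; simp
    _ ≤ S.card := Finset.card_le_card hsub

lemma kb_resolving0_univ (hs : 1 ≤ s) (ht : 1 ≤ t)
    {S : Finset (Fin s ⊕ Fin t)} (hS : IsMixedResolving (KB s t) 0 S) :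
    ∀ x : Fin s ⊕ Fin t, x ∈ S := by
  have htr : ∀ (tt : (Fin s ⊕ Fin t) ⊕ (KB s t).edgeSet) (v : Fin s ⊕ Fin t),
      truncItemDist (KB s t) 0 tt v = min (itemEDist (KB s t) tt v) 1 := by
    intro tt v
    unfold truncItemDist
    norm_num
  intro x
  rcases x with a | b
  · set b0 : Fin t := ⟨0, ht⟩
    have hne : (Sum.inl (Sum.inr b0) : (Fin s ⊕ Fin t) ⊕ (KB s t).edgeSet) ≠
        Sum.inr ⟨s(Sum.inl a, Sum.inr b0), kb_mem_edgeSet a b0⟩ := by simp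
    obtain ⟨v, hv, hd⟩ := hS _ _ hne
    rw [htr, htr, itemEDist_inl, itemEDist_inr] at hd
    rcases v with c | d
    · rcases eq_or_ne c a with rfl | hca
      · exact hv
      · exfalso
        apply hd
        rw [kb_edist_rl, kb_edgeEDist_ne a b0 (by simp [hca]) (by simp)]
    · exfalso
      apply hd
      rcases eq_or_ne d b0 with rfl | hdb
      · rw [edist_self, kb_edgeEDist_endr]
      · have h1 : (KB s t).edist (Sum.inr b0) (Sum.inr d) ≠ 0 := by
          simp [edist_eq_zero_iff, Ne.symm hdb]
        rw [kb_edgeEDist_ne a b0 (by simp) (by simp [hdb]),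
          min_eq_right (ENat.one_le_iff_ne_zero.mpr h1), min_self]
  · set a0 : Fin s := ⟨0, hs⟩
    have hne : (Sum.inl (Sum.inl a0) : (Fin s ⊕ Fin t) ⊕ (KB s t).edgeSet) ≠
        Sum.inr ⟨s(Sum.inl a0, Sum.inr b), kb_mem_edgeSet a0 b⟩ := by simp
    obtain ⟨v, hv, hd⟩ := hS _ _ hne
    rw [htr, htr, itemEDist_inl, itemEDist_inr] at hd
    rcases v with c | d
    · exfalso
      apply hd
      rcases eq_or_ne c a0 with rfl | hca
      · rw [edist_self, kb_edgeEDist_endl]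
      · have h1 : (KB s t).edist (Sum.inl a0) (Sum.inl c) ≠ 0 := by
          simp [edist_eq_zero_iff, Ne.symm hca]
        rw [kb_edgeEDist_ne a0 b (by simp [hca]) (by simp),
          min_eq_right (ENat.one_le_iff_ne_zero.mpr h1), min_self]
    · rcases eq_or_ne d b with rfl | hdb
      · exact hv
      · exfalso
        apply hd
        rw [kb_edist_lr, kb_edgeEDist_ne a0 b (by simp) (by simp [hdb])]

lemma kb_mdim0 (hs : 1 ≤ s) (ht : 1 ≤ t) : mdimr (KB s t) 0 = s + t := by
  apply le_antisymm
  · have h := mdimr_le (kb_univ_resolving (s := s) (t := t) 0)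
    calc mdimr (KB s t) 0 ≤ (Finset.univ : Finset (Fin s ⊕ Fin t)).card := h
      _ = s + t := by simp
  · apply le_mdimr ⟨Finset.univ, kb_univ_resolving 0⟩
    intro S hS
    have hsub : (Finset.univ : Finset (Fin s ⊕ Fin t)) ⊆ S :=
      fun x _ => kb_resolving0_univ hs ht hS x
    have := Finset.card_le_card hsub
    simpa using this

lemma kb_S3_resolving (hs3 : 3 ≤ s) (ht3 : 3 ≤ t) (a0 : Fin s) (b0 : Fin t) :
    IsMixedResolving (KB s t) 1
      (({Sum.inl a0, Sum.inr b0} : Finset (Fin s ⊕ Fin t))ᶜ) := by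
  classical
  have hs : 1 ≤ s := by omega
  have ht : 1 ≤ t := by omega
  have hmem : ∀ v : Fin s ⊕ Fin t, v ≠ Sum.inl a0 → v ≠ Sum.inr b0 →
      v ∈ ({Sum.inl a0, Sum.inr b0} : Finset (Fin s ⊕ Fin t))ᶜ := by
    intro v h1 h2
    rw [Finset.mem_compl]
    simp [h1, h2]
  intro t₁ t₂ hne
  suffices h : ∃ v ∈ ({Sum.inl a0, Sum.inr b0} : Finset (Fin s ⊕ Fin t))ᶜ,
      itemEDist (KB s t) t₁ v ≠ itemEDist (KB s t) t₂ v by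
    obtain ⟨v, hv, hd⟩ := h
    refine ⟨v, hv, ?_⟩
    have h2 : (2 : ℕ∞) ≤ ((1 : ℕ) : ℕ∞) + 1 := by norm_num
    unfold truncItemDist
    rw [min_eq_left ((kb_itemEDist_le_two hs ht t₁ v).trans h2),
      min_eq_left ((kb_itemEDist_le_two hs ht t₂ v).trans h2)]
    exact hd
  have ver : ∀ (x : Fin s ⊕ Fin t) (a : Fin s) (b : Fin t),
      ∃ v ∈ ({Sum.inl a0, Sum.inr b0} : Finset (Fin s ⊕ Fin t))ᶜ,
        (KB s t).edist x v ≠ edgeEDist (KB s t) s(Sum.inl a, Sum.inr b) v := by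
    intro x a b
    rcases x with xa | xb
    · rcases eq_or_ne xa a with rfl | hxa
      · obtain ⟨c, hc1, hc2⟩ := fin_exists_ne_ne hs3 xa a0
        refine ⟨Sum.inl c, hmem _ (by simp [hc2]) (by simp), ?_⟩
        rw [kb_edist_ll ht (Ne.symm hc1), kb_edgeEDist_ne xa b (by simp [hc1]) (by simp)]
        decide
      · rcases eq_or_ne xa a0 with rfl | hx0
        · obtain ⟨c, hc1, hc2⟩ := fin_exists_ne_ne hs3 xa a
          refine ⟨Sum.inl c, hmem _ (by simp [hc1]) (by simp), ?_⟩
          rw [kb_edist_ll ht (Ne.symm hc1), kb_edgeEDist_ne a b (by simp [hc2]) (by simp)]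
          decide
        · refine ⟨Sum.inl xa, hmem _ (by simp [hx0]) (by simp), ?_⟩
          rw [edist_self, kb_edgeEDist_ne a b (by simp [hxa]) (by simp)]
          decide
    · rcases eq_or_ne xb b with rfl | hxb
      · obtain ⟨c, hc1, hc2⟩ := fin_exists_ne_ne ht3 xb b0
        refine ⟨Sum.inr c, hmem _ (by simp) (by simp [hc2]), ?_⟩
        rw [kb_edist_rr hs (Ne.symm hc1), kb_edgeEDist_ne a xb (by simp) (by simp [hc1])]
        decide
      · rcases eq_or_ne xb b0 with rfl | hx0
        · obtain ⟨c, hc1, hc2⟩ := fin_exists_ne_ne ht3 xb b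
          refine ⟨Sum.inr c, hmem _ (by simp) (by simp [hc1]), ?_⟩
          rw [kb_edist_rr hs (Ne.symm hc1), kb_edgeEDist_ne a b (by simp) (by simp [hc2])]
          decide
        · refine ⟨Sum.inr xb, hmem _ (by simp) (by simp [hx0]), ?_⟩
          rw [edist_self, kb_edgeEDist_ne a b (by simp) (by simp [hxb])]
          decide
  rcases t₁ with x | ⟨e, he⟩ <;> rcases t₂ with y | ⟨f, hf⟩
  · have hxy : x ≠ y := fun h => hne (by rw [h])
    by_cases hx : x = Sum.inl a0 ∨ x = Sum.inr b0
    · by_cases hy : y = Sum.inl a0 ∨ y = Sum.inr b0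
      · obtain ⟨c, hc1, hc2⟩ := fin_exists_ne_ne hs3 a0 a0
        refine ⟨Sum.inl c, hmem _ (by simp [hc1]) (by simp), ?_⟩
        rw [itemEDist_inl, itemEDist_inl]
        rcases hx with rfl | rfl <;> rcases hy with rfl | rfl
        · exact absurd rfl hxy
        · rw [kb_edist_ll ht (fun h => hc1 h.symm), kb_edist_rl]
          decide
        · rw [kb_edist_rl, kb_edist_ll ht (fun h => hc1 h.symm)]
          decide
        · exact absurd rfl hxy
      · push_neg at hy
        refine ⟨y, hmem _ hy.1 hy.2, ?_⟩
        rw [itemEDist_inl, itemEDist_inl, edist_self]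
        simp [edist_eq_zero_iff, hxy]
    · push_neg at hx
      refine ⟨x, hmem _ hx.1 hx.2, ?_⟩
      rw [itemEDist_inl, itemEDist_inl, edist_self]
      have h1 : (KB s t).edist y x ≠ 0 := by
        simp [edist_eq_zero_iff, Ne.symm hxy]
      exact Ne.symm h1
  · obtain ⟨a, b, rfl⟩ := kb_edge_form hf
    obtain ⟨v, hv, hd⟩ := ver x a b
    exact ⟨v, hv, by simpa [itemEDist_inl, itemEDist_inr] using hd⟩
  · obtain ⟨a, b, rfl⟩ := kb_edge_form he
    obtain ⟨v, hv, hd⟩ := ver y a b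
    exact ⟨v, hv, by simpa [itemEDist_inl, itemEDist_inr] using hd.symm⟩
  · have hef : e ≠ f := by intro h; subst h; exact hne rfl
    obtain ⟨a, b, rfl⟩ := kb_edge_form he
    obtain ⟨a', b', rfl⟩ := kb_edge_form hf
    have hab : a ≠ a' ∨ b ≠ b' := by
      by_contra hc
      push_neg at hc
      exact hef (by rw [hc.1, hc.2])
    rcases hab with haa | hbb
    · by_cases h0 : a = a0
      · have ha' : a' ≠ a0 := fun h => haa (by rw [h0, h])
        refine ⟨Sum.inl a', hmem _ (by simp [ha']) (by simp), ?_⟩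
        rw [itemEDist_inr, itemEDist_inr,
          kb_edgeEDist_ne a b (by simp [Ne.symm haa]) (by simp), kb_edgeEDist_endl]
        decide
      · refine ⟨Sum.inl a, hmem _ (by simp [h0]) (by simp), ?_⟩
        rw [itemEDist_inr, itemEDist_inr, kb_edgeEDist_endl,
          kb_edgeEDist_ne a' b' (by simp [haa]) (by simp)]
        decide
    · by_cases h0 : b = b0
      · have hb' : b' ≠ b0 := fun h => hbb (by rw [h0, h])
        refine ⟨Sum.inr b', hmem _ (by simp) (by simp [hb']), ?_⟩
        rw [itemEDist_inr, itemEDist_inr,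
          kb_edgeEDist_ne a b (by simp) (by simp [Ne.symm hbb]), kb_edgeEDist_endr]
        decide
      · refine ⟨Sum.inr b, hmem _ (by simp) (by simp [h0]), ?_⟩
        rw [itemEDist_inr, itemEDist_inr, kb_edgeEDist_endr,
          kb_edgeEDist_ne a' b' (by simp) (by simp [hbb])]
        decide

end Aux

/-- For all positive integers `s, t`, `th_mdim(K_{s,t}) = s + t` if
`min(s,t) ≤ 2`, and `th_mdim(K_{s,t}) = s + t - 1` otherwise. -/
theorem stmt18 (s t : ℕ) (hs : 1 ≤ s) (ht : 1 ≤ t) :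
    thMdim (completeBipartiteGraph (Fin s) (Fin t)) =
      if min s t ≤ 2 then s + t else s + t - 1 := by
  show thMdim (KB s t) = _
  have hmdim0 : mdimr (KB s t) 0 = s + t := kb_mdim0 hs ht
  by_cases hmin : min s t ≤ 2
  · rw [if_pos hmin]
    apply le_antisymm
    · have h := thMdim_le (KB s t) 0
      rw [hmdim0] at h
      omega
    · apply le_thMdim
      intro r
      rcases Nat.eq_zero_or_pos r with rfl | hr
      · rw [hmdim0]
        omega
      · have hub : s + t - 1 ≤ mdimr (KB s t) r := by
          apply le_mdimr ⟨Finset.univ, kb_univ_resolving r⟩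
          intro S hS
          have hcase : s = 1 ∨ t = 1 ∨ s = 2 ∨ t = 2 := by omega
          rcases hcase with h1 | h1 | h1 | h1
          · have hone : ∀ a a' : Fin s, a = a' := by
              intro a a'
              have := a.isLt
              have := a'.isLt
              rw [Fin.ext_iff]
              omega
            have := kb_card_s1 hs ht hr hS hone
            omega
          · have hone : ∀ b b' : Fin t, b = b' := by
              intro b b'
              have := b.isLt
              have := b'.isLt
              rw [Fin.ext_iff]
              omega
            have := kb_card_t1 hs ht hr hS hone
            omega
          · have hb : (⟨0, by omega⟩ : Fin s) ≠ ⟨1, by omega⟩ := by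
              simp [Fin.ext_iff]
            have htwo : ∀ a : Fin s, a = ⟨0, by omega⟩ ∨ a = ⟨1, by omega⟩ := by
              intro a
              have := a.isLt
              rw [Fin.ext_iff, Fin.ext_iff]
              omega
            have hc := kb_compl_le_one_s2 hs ht hr hS hb htwo
            have := kb_card_total S
            omega
          · have hb : (⟨0, by omega⟩ : Fin t) ≠ ⟨1, by omega⟩ := by
              simp [Fin.ext_iff]
            have htwo : ∀ b : Fin t, b = ⟨0, by omega⟩ ∨ b = ⟨1, by omega⟩ := by
              intro b
              have := b.isLt
              rw [Fin.ext_iff, Fin.ext_iff]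
              omega
            have hc := kb_compl_le_one_t2 hs ht hr hS hb htwo
            have := kb_card_total S
            omega
        omega
  · rw [if_neg hmin]
    have hs3 : 3 ≤ s := by omega
    have ht3 : 3 ≤ t := by omega
    have hmdim1 : mdimr (KB s t) 1 = s + t - 2 := by
      apply le_antisymm
      · have hres := kb_S3_resolving hs3 ht3 ⟨0, by omega⟩ ⟨0, by omega⟩
        have hle := mdimr_le hres
        have hcard : (({Sum.inl (⟨0, by omega⟩ : Fin s),
            Sum.inr (⟨0, by omega⟩ : Fin t)} : Finset (Fin s ⊕ Fin t))ᶜ).card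
            = s + t - 2 := by
          rw [Finset.card_compl, Finset.card_pair (by simp)]
          simp
        rw [hcard] at hle
        exact hle
      · apply le_mdimr ⟨Finset.univ, kb_univ_resolving 1⟩
        intro S hS
        have hc := kb_compl_le_two (by omega) (by omega) le_rfl hS
        have := kb_card_total S
        omega
    apply le_antisymm
    · have h := thMdim_le (KB s t) 1
      rw [hmdim1] at h
      omega
    · apply le_thMdim
      intro r
      rcases Nat.eq_zero_or_pos r with rfl | hr
      · rw [hmdim0]
        omega
      · have hub : s + t - 2 ≤ mdimr (KB s t) r := by
          apply le_mdimr ⟨Finset.univ, kb_univ_resolving r⟩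
          intro S hS
          have hc := kb_compl_le_two (by omega) (by omega) hr hS
          have := kb_card_total S
          omega
        omega
end
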